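/- arXiv:2406.12107 — 5 statements merged into one kernel-verified Lean document; each statement's English description precedes it below -/
import Mathlib

section
/- Let n ≥ 1 and let A, B ∈ GL(n,ℝ) be hyperbolic-like matrices such that each of the lines A_A, R_A differs from each of the lines A_B, R_B, and such that each of the image lines A(A_B), A(R_B) differs from each of A_B, R_B. Then AB ≠ BA. -/
/-- `lam` is a *dominant* eigenvalue of the real matrix `C`: it is a real root of the
characteristic polynomial of algebraic multiplicity 1, and `|lam| > max (|mu|, 1)` for
every other complex eigenvalue `mu` of `C`. -/
def IsDominantEigenvalue {n : ℕ} (C : Matrix (Fin n) (Fin n) ℝ) (lam : ℝ) : Prop :=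
  (Matrix.charpoly (C.map (Complex.ofReal))).roots.count (lam : ℂ) = 1 ∧
  1 < |lam| ∧
  ∀ mu ∈ (Matrix.charpoly (C.map (Complex.ofReal))).roots,
    mu ≠ (lam : ℂ) → ‖mu‖ < |lam|

/-- The eigenspace of the real matrix `C` for the eigenvalue `lam`, as a subspace of `ℝⁿ`. -/
noncomputable def eigLine {n : ℕ} (C : Matrix (Fin n) (Fin n) ℝ) (lam : ℝ) :
    Submodule ℝ (Fin n → ℝ) :=
  Module.End.eigenspace (Matrix.toLin' C) lam

theorem Submodule.map_eq_self_of_injective {K V : Type*} [DivisionRing K] [AddCommGroup V]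
    [Module K V] {p : Submodule K V} [FiniteDimensional K p] {f : V →ₗ[K] V}
    (hf : Function.Injective f) (hp : p.map f ≤ p) : p.map f = p :=
  Submodule.eq_of_le_of_finrank_le hp (Submodule.equivMapOfInjective f hf p).finrank_eq.le

theorem Module.End.map_eigenspace_eq_of_commute {K V : Type*} [Field K] [AddCommGroup V]
    [Module K V] [FiniteDimensional K V] {f g : Module.End K V} (h : Commute g f)
    (hf : Function.Injective f) (μ : K) : (g.eigenspace μ).map f = g.eigenspace μ :=
  Submodule.map_eq_self_of_injective hf
    (Submodule.map_le_iff_le_comap.2 (mapsTo_genEigenspace_of_comm h μ 1))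

theorem stmt3_general (n : ℕ) (A B : GL (Fin n) ℝ) (lamB : ℝ)
    (h5 : Submodule.map (Matrix.toLin' (A : Matrix (Fin n) (Fin n) ℝ))
        (eigLine (B : Matrix (Fin n) (Fin n) ℝ) lamB) ≠
      eigLine (B : Matrix (Fin n) (Fin n) ℝ) lamB) :
    A * B ≠ B * A := by
  intro hAB
  have hcomm : Commute (B : Matrix (Fin n) (Fin n) ℝ) A := (Units.ext_iff.1 hAB).symm
  have hinj : Function.Injective (Matrix.toLin' (A : Matrix (Fin n) (Fin n) ℝ)) :=
    ((Module.End.isUnit_iff _).1 (A.isUnit.map Matrix.toLinAlgEquiv')).injective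
  exact h5 (Module.End.map_eigenspace_eq_of_commute (hcomm.map Matrix.toLinAlgEquiv') hinj lamB)

/-- Proposition 2.3 of the paper: if `A`, `B` are hyperbolic-like matrices in `GL(n,ℝ)`
(with dominant eigenvalues `lamA`, `lamB` and smallest eigenvalues `muA`, `muB`, where
`muA⁻¹`, `muB⁻¹` are the dominant eigenvalues of `A⁻¹`, `B⁻¹`) such that the attracting
and repelling lines of `A` differ from those of `B`, and the images under `A` of the
attracting and repelling lines of `B` differ from those lines, then `A` and `B` do not
commute. -/
theorem stmt3 (n : ℕ) (hn : 1 ≤ n) (A B : GL (Fin n) ℝ) (lamA muA lamB muB : ℝ)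
    (hAdom : IsDominantEigenvalue (A : Matrix (Fin n) (Fin n) ℝ) lamA)
    (hAdom' : IsDominantEigenvalue ((A⁻¹ : GL (Fin n) ℝ) : Matrix (Fin n) (Fin n) ℝ) muA⁻¹)
    (hBdom : IsDominantEigenvalue (B : Matrix (Fin n) (Fin n) ℝ) lamB)
    (hBdom' : IsDominantEigenvalue ((B⁻¹ : GL (Fin n) ℝ) : Matrix (Fin n) (Fin n) ℝ) muB⁻¹)
    (h1 : eigLine (A : Matrix (Fin n) (Fin n) ℝ) lamA ≠
      eigLine (B : Matrix (Fin n) (Fin n) ℝ) lamB)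
    (h2 : eigLine (A : Matrix (Fin n) (Fin n) ℝ) lamA ≠
      eigLine (B : Matrix (Fin n) (Fin n) ℝ) muB)
    (h3 : eigLine (A : Matrix (Fin n) (Fin n) ℝ) muA ≠
      eigLine (B : Matrix (Fin n) (Fin n) ℝ) lamB)
    (h4 : eigLine (A : Matrix (Fin n) (Fin n) ℝ) muA ≠
      eigLine (B : Matrix (Fin n) (Fin n) ℝ) muB)
    (h5 : Submodule.map (Matrix.toLin' (A : Matrix (Fin n) (Fin n) ℝ))
        (eigLine (B : Matrix (Fin n) (Fin n) ℝ) lamB) ≠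
      eigLine (B : Matrix (Fin n) (Fin n) ℝ) lamB)
    (h6 : Submodule.map (Matrix.toLin' (A : Matrix (Fin n) (Fin n) ℝ))
        (eigLine (B : Matrix (Fin n) (Fin n) ℝ) lamB) ≠
      eigLine (B : Matrix (Fin n) (Fin n) ℝ) muB)
    (h7 : Submodule.map (Matrix.toLin' (A : Matrix (Fin n) (Fin n) ℝ))
        (eigLine (B : Matrix (Fin n) (Fin n) ℝ) muB) ≠
      eigLine (B : Matrix (Fin n) (Fin n) ℝ) lamB)
    (h8 : Submodule.map (Matrix.toLin' (A : Matrix (Fin n) (Fin n) ℝ))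
        (eigLine (B : Matrix (Fin n) (Fin n) ℝ) muB) ≠
      eigLine (B : Matrix (Fin n) (Fin n) ℝ) muB) :
    A * B ≠ B * A :=
  stmt3_general n A B lamB h5
end

section
/- Let G be a group and ρ₂ : G → GL(2,ℂ) a group homomorphism. Let a, b ∈ G be such that each of the matrices ρ₂(a) and ρ₂(b) has two real eigenvalues λ, μ with |μ| < 1 < |λ|, and such that ρ₂(a) and ρ₂(b) have no common eigenvector in ℂ². Then there exists N ≥ 1 such that for all m, n ≥ N, the elements a^m and b^n freely generate a free subgroup of rank two in G. -/
/-!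
Ping-pong on the nonzero vectors of `ℂ²`. Put `wedge x y = x₀ y₁ - x₁ y₀`. If `A u = α u` and
`A v = β v` with `‖β‖ < ‖α‖`, then `wedge u (A x) = β · wedge u x` and
`wedge v (A x) = α · wedge v x`; hence a high power of `A` maps everything outside a thin cone
around the repelling line `ℂ v` into a thin cone around the attracting line `ℂ u`, and its
inverse does the opposite. When `A` and `B` have no common eigenvector their four eigenlines are
pairwise distinct, so for small `ε` the four cones are disjoint and the ping-pong lemma applies.
-/

/-- The 2×2 complex matrix `C` is hyperbolic in the sense of the paper: it has two real
eigenvalues `lam`, `mu` with `|mu| < 1 < |lam|`. -/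
def IsHyperbolic2 (C : Matrix (Fin 2) (Fin 2) ℂ) : Prop :=
  ∃ lam mu : ℝ, |mu| < 1 ∧ 1 < |lam| ∧
    Module.End.HasEigenvalue (Matrix.toLin' C) (lam : ℂ) ∧
    Module.End.HasEigenvalue (Matrix.toLin' C) (mu : ℂ)

open Filter Topology Pointwise Matrix

section CommRing

variable {R : Type*} [CommRing R]

def wedge (x y : Fin 2 → R) : R := x 0 * y 1 - x 1 * y 0

@[simp]
lemma wedge_self (x : Fin 2 → R) : wedge x x = 0 := by
  simp only [wedge, mul_comm, sub_self]

lemma wedge_swap (x y : Fin 2 → R) : wedge y x = -wedge x y := by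
  simp only [wedge]; ring

lemma wedge_smul_right (x y : Fin 2 → R) (c : R) : wedge x (c • y) = c * wedge x y := by
  simp only [wedge, Pi.smul_apply, smul_eq_mul]; ring

lemma wedge_sub_right (x y z : Fin 2 → R) : wedge x (y - z) = wedge x y - wedge x z := by
  simp only [wedge, Pi.sub_apply]; ring

lemma wedge_smul_eq (e f w : Fin 2 → R) : wedge e f • w = wedge e w • f - wedge f w • e := by
  ext i; fin_cases i <;> simp [wedge] <;> ring

lemma Matrix.pow_mulVec_eq_pow_smul {n : Type*} [Fintype n] [DecidableEq n] {M : Matrix n n R}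
    {u : n → R} {α : R} (h : M *ᵥ u = α • u) (m : ℕ) : (M ^ m) *ᵥ u = α ^ m • u := by
  induction m with
  | zero => simp
  | succ m ih => rw [pow_succ, ← mulVec_mulVec, h, mulVec_smul, ih, smul_smul, ← pow_succ']

def HasCommonEigenvector {n : Type*} [Fintype n] (M N : Matrix n n R) : Prop :=
  ∃ v : n → R, v ≠ 0 ∧ (∃ c : R, M *ᵥ v = c • v) ∧ (∃ c : R, N *ᵥ v = c • v)

lemma HasCommonEigenvector.symm {n : Type*} [Fintype n] {M N : Matrix n n R}
    (h : HasCommonEigenvector M N) : HasCommonEigenvector N M :=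
  let ⟨v, hv, hM, hN⟩ := h; ⟨v, hv, hN, hM⟩

end CommRing

section Field

variable {K : Type*} [Field K]

lemma exists_eq_smul_of_wedge_eq_zero {x y : Fin 2 → K} (hx : x ≠ 0) (h : wedge x y = 0) :
    ∃ c : K, y = c • x := by
  obtain ⟨b, hb⟩ : ∃ b, wedge x b ≠ 0 := by
    by_contra! hb
    refine hx (funext fun i => ?_)
    fin_cases i
    · simpa [wedge] using hb (Pi.single 1 1)
    · simpa [wedge] using hb (Pi.single 0 1)
  refine ⟨-wedge b y / wedge x b, ?_⟩
  have hy := wedge_smul_eq x b y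
  rw [h, zero_smul, zero_sub] at hy
  rw [div_eq_inv_mul, mul_smul, neg_smul, ← hy, inv_smul_smul₀ hb]

lemma mulVec_eq_smul_of_wedge_eq_zero {M : Matrix (Fin 2) (Fin 2) K} {x y : Fin 2 → K} {c : K}
    (hx0 : x ≠ 0) (hx : M *ᵥ x = c • x) (h : wedge x y = 0) : M *ᵥ y = c • y := by
  obtain ⟨d, rfl⟩ := exists_eq_smul_of_wedge_eq_zero hx0 h
  rw [mulVec_smul, hx, smul_comm]

lemma wedge_ne_zero_of_eigenvalue_ne {M : Matrix (Fin 2) (Fin 2) K} {u v : Fin 2 → K} {α β : K}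
    (hu0 : u ≠ 0) (hv0 : v ≠ 0) (hu : M *ᵥ u = α • u) (hv : M *ᵥ v = β • v) (hαβ : α ≠ β) :
    wedge u v ≠ 0 := fun h =>
  hαβ <| smul_left_injective K hv0 <| (mulVec_eq_smul_of_wedge_eq_zero hu0 hu h).symm.trans hv

lemma wedge_ne_zero_of_not_hasCommonEigenvector {M N : Matrix (Fin 2) (Fin 2) K}
    (hMN : ¬HasCommonEigenvector M N) ⦃x y : Fin 2 → K⦄ ⦃c d : K⦄ (hx0 : x ≠ 0) (hy0 : y ≠ 0)
    (hx : M *ᵥ x = c • x) (hy : N *ᵥ y = d • y) : wedge x y ≠ 0 := fun h =>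
  hMN ⟨y, hy0, ⟨c, mulVec_eq_smul_of_wedge_eq_zero hx0 hx h⟩, ⟨d, hy⟩⟩

lemma wedge_mulVec_of_mulVec_eq_smul {M : Matrix (Fin 2) (Fin 2) K} {u v : Fin 2 → K} {α β : K}
    (hu : M *ᵥ u = α • u) (hv : M *ᵥ v = β • v) (huv : wedge u v ≠ 0) (w : Fin 2 → K) :
    wedge u (M *ᵥ w) = β * wedge u w := by
  have h := congrArg (fun x => wedge u (M *ᵥ x)) (wedge_smul_eq u v w)
  simp only [mulVec_smul, mulVec_sub, hu, hv, wedge_smul_right, wedge_sub_right, wedge_self,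
    mul_zero, sub_zero] at h
  exact mul_left_cancel₀ huv (by rw [h]; ring)

lemma Matrix.GeneralLinearGroup.inv_mulVec_eq_inv_smul {n : Type*} [Fintype n] [DecidableEq n]
    {U : GL n K} {u : n → K} {α : K} (h : (U : Matrix n n K) *ᵥ u = α • u) :
    (↑U⁻¹ : Matrix n n K) *ᵥ u = α⁻¹ • u := by
  have hinv : α • ((↑U⁻¹ : Matrix n n K) *ᵥ u) = u := by
    rw [← mulVec_smul, ← h, mulVec_mulVec, ← Units.val_mul, inv_mul_cancel, Units.val_one,
      one_mulVec]
  rcases eq_or_ne α 0 with rfl | hα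
  · rw [zero_smul] at hinv
    simp [← hinv]
  · rw [eq_inv_smul_iff₀ hα, hinv]

end Field

section NormedField

variable {𝕜 : Type*} [NormedField 𝕜]

lemma norm_wedge_le (x y : Fin 2 → 𝕜) : ‖wedge x y‖ ≤ 2 * ‖x‖ * ‖y‖ := by
  have h := fun i j => mul_le_mul (norm_le_pi_norm x i) (norm_le_pi_norm y j)
    (norm_nonneg _) (norm_nonneg _)
  calc ‖wedge x y‖ ≤ ‖x 0‖ * ‖y 1‖ + ‖x 1‖ * ‖y 0‖ := by
        simpa only [wedge, norm_mul] using norm_sub_le (x 0 * y 1) (x 1 * y 0)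
    _ ≤ 2 * ‖x‖ * ‖y‖ := by linarith [h 0 1, h 1 0]

/-- For small `ε`, a conical neighbourhood of the line through `e`, measured against the
line through `f`. -/
def wedgeCone (e f : Fin 2 → 𝕜) (ε : ℝ) : Set {x : Fin 2 → 𝕜 // x ≠ 0} :=
  {x | ‖wedge e x‖ ≤ ε * ‖wedge f x‖}

@[simp]
lemma mem_wedgeCone {e f : Fin 2 → 𝕜} {ε : ℝ} {x : {x : Fin 2 → 𝕜 // x ≠ 0}} :
    x ∈ wedgeCone e f ε ↔ ‖wedge e x‖ ≤ ε * ‖wedge f x‖ :=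
  Iff.rfl

lemma eventually_disjoint_wedgeCone {e₁ e₂ : Fin 2 → 𝕜} (f₁ f₂ : Fin 2 → 𝕜)
    (h : wedge e₁ e₂ ≠ 0) :
    ∀ᶠ ε in 𝓝[>] (0 : ℝ), Disjoint (wedgeCone e₁ f₁ ε) (wedgeCone e₂ f₂ ε) := by
  set C := 2 * (‖f₁‖ * ‖e₂‖ + ‖f₂‖ * ‖e₁‖)
  have hsmall : ∀ᶠ ε in 𝓝 (0 : ℝ), ε * C < ‖wedge e₁ e₂‖ :=
    (continuous_id.mul continuous_const).tendsto' 0 0 (zero_mul C) |>.eventually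
      (gt_mem_nhds (norm_pos_iff.2 h))
  filter_upwards [self_mem_nhdsWithin, nhdsWithin_le_nhds hsmall] with ε (hε : 0 < ε) hεC
  refine Set.disjoint_left.2 fun ⟨x, hx0⟩ h₁ h₂ => ?_
  rw [mem_wedgeCone] at h₁ h₂
  have key : ‖wedge e₁ e₂‖ * ‖x‖ ≤ ε * C * ‖x‖ :=
    calc ‖wedge e₁ e₂‖ * ‖x‖
        = ‖wedge e₁ x • e₂ - wedge e₂ x • e₁‖ := by rw [← wedge_smul_eq, norm_smul]
      _ ≤ ‖wedge e₁ x‖ * ‖e₂‖ + ‖wedge e₂ x‖ * ‖e₁‖ := by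
        simpa only [norm_smul] using norm_sub_le (wedge e₁ x • e₂) (wedge e₂ x • e₁)
      _ ≤ ε * (2 * ‖f₁‖ * ‖x‖) * ‖e₂‖ + ε * (2 * ‖f₂‖ * ‖x‖) * ‖e₁‖ := by
        gcongr
        · exact h₁.trans (by gcongr; exact norm_wedge_le _ _)
        · exact h₂.trans (by gcongr; exact norm_wedge_le _ _)
      _ = ε * C * ‖x‖ := by ring
  exact (le_of_mul_le_mul_right key (norm_pos_iff.2 hx0)).not_gt hεC

lemma eventually_pairwise_disjoint_wedgeCone {ι : Type*} [Finite ι] {e : ι → Fin 2 → 𝕜}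
    (f : ι → Fin 2 → 𝕜) (h : Pairwise fun i j => wedge (e i) (e j) ≠ 0) :
    ∀ᶠ ε in 𝓝[>] (0 : ℝ), Pairwise fun i j => Disjoint (wedgeCone (e i) (f i) ε)
      (wedgeCone (e j) (f j) ε) :=
  eventually_all.2 fun _ => eventually_all.2 fun _ =>
    eventually_imp_distrib_left.2 fun hij => eventually_disjoint_wedgeCone _ _ (h hij)

lemma smul_compl_wedgeCone_subset {U : GL (Fin 2) 𝕜} {u v : Fin 2 → 𝕜} {α β : 𝕜} {ε : ℝ}
    (hu : (U : Matrix (Fin 2) (Fin 2) 𝕜) *ᵥ u = α • u)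
    (hv : (U : Matrix (Fin 2) (Fin 2) 𝕜) *ᵥ v = β • v) (huv : wedge u v ≠ 0) (hε : 0 < ε)
    (hβα : ‖β‖ ≤ ε ^ 2 * ‖α‖) :
    U • (wedgeCone v u ε)ᶜ ⊆ wedgeCone u v ε := by
  rintro _ ⟨x, hx, rfl⟩
  rw [Set.mem_compl_iff, mem_wedgeCone, not_le] at hx
  have hvu : wedge v u ≠ 0 := by rw [wedge_swap]; exact neg_ne_zero.2 huv
  show ‖wedge u (↑U *ᵥ (x : Fin 2 → 𝕜))‖ ≤ ε * ‖wedge v (↑U *ᵥ (x : Fin 2 → 𝕜))‖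
  rw [wedge_mulVec_of_mulVec_eq_smul hu hv huv, wedge_mulVec_of_mulVec_eq_smul hv hu hvu,
    norm_mul, norm_mul]
  calc ‖β‖ * ‖wedge u x‖ ≤ ε ^ 2 * ‖α‖ * ‖wedge u x‖ := by gcongr
    _ = ε * ‖α‖ * (ε * ‖wedge u x‖) := by ring
    _ ≤ ε * ‖α‖ * ‖wedge v x‖ := by gcongr
    _ = ε * (‖α‖ * ‖wedge v x‖) := by ring

lemma inv_smul_compl_wedgeCone_subset {U : GL (Fin 2) 𝕜} {u v : Fin 2 → 𝕜} {α β : 𝕜} {ε : ℝ}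
    (hu : (U : Matrix (Fin 2) (Fin 2) 𝕜) *ᵥ u = α • u)
    (hv : (U : Matrix (Fin 2) (Fin 2) 𝕜) *ᵥ v = β • v) (huv : wedge u v ≠ 0) (hε : 0 < ε)
    (hβ : β ≠ 0) (hβα : ‖β‖ ≤ ε ^ 2 * ‖α‖) :
    U⁻¹ • (wedgeCone u v ε)ᶜ ⊆ wedgeCone v u ε := by
  have hα : 0 < ‖α‖ := by
    by_contra! h
    exact hβ (norm_le_zero_iff.1 (hβα.trans (by nlinarith [norm_nonneg α])))
  refine smul_compl_wedgeCone_subset (GeneralLinearGroup.inv_mulVec_eq_inv_smul hv)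
    (GeneralLinearGroup.inv_mulVec_eq_inv_smul hu) (by rw [wedge_swap]; exact neg_ne_zero.2 huv)
    hε ?_
  rw [norm_inv, norm_inv, ← div_eq_mul_inv, le_div_iff₀ (norm_pos_iff.2 hβ),
    inv_mul_le_iff₀ hα, mul_comm]
  exact hβα

end NormedField

lemma eventually_pow_le_mul_pow {r s c : ℝ} (hr : 0 ≤ r) (hrs : r < s) (hc : 0 < c) :
    ∀ᶠ m : ℕ in atTop, r ^ m ≤ c * s ^ m := by
  have hs : 0 < s := hr.trans_lt hrs
  filter_upwards [(tendsto_pow_atTop_nhds_zero_of_lt_one (div_nonneg hr hs.le)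
    ((div_lt_one hs).2 hrs)).eventually (gt_mem_nhds hc)] with m hm
  rw [div_pow, div_lt_iff₀ (pow_pos hs m)] at hm
  exact hm.le

lemma IsHyperbolic2.exists_eigenvectors {A : GL (Fin 2) ℂ}
    (h : IsHyperbolic2 (A : Matrix (Fin 2) (Fin 2) ℂ)) :
    ∃ (α β : ℂ) (u v : Fin 2 → ℂ), u ≠ 0 ∧ v ≠ 0 ∧
      (A : Matrix (Fin 2) (Fin 2) ℂ) *ᵥ u = α • u ∧ (A : Matrix (Fin 2) (Fin 2) ℂ) *ᵥ v = β • v ∧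
      β ≠ 0 ∧ ‖β‖ < ‖α‖ := by
  obtain ⟨lam, mu, hmu, hlam, hElam, hEmu⟩ := h
  obtain ⟨u, hu⟩ := hElam.exists_hasEigenvector
  obtain ⟨v, hv⟩ := hEmu.exists_hasEigenvector
  have hAv : (A : Matrix (Fin 2) (Fin 2) ℂ) *ᵥ v = (mu : ℂ) • v := by
    rw [← toLin'_apply]; exact hv.apply_eq_smul
  refine ⟨lam, mu, u, v, hu.2, hv.2, by rw [← toLin'_apply]; exact hu.apply_eq_smul, hAv,
    fun h0 => ?_, by simpa only [Complex.norm_real, Real.norm_eq_abs] using hmu.trans hlam⟩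
  have : A • v ≠ 0 := (smul_ne_zero_iff_ne A).2 hv.2
  exact this (by rw [Units.smul_def, smul_eq_mulVec, hAv, h0, zero_smul])

theorem eventually_injective_lift_pow_of_isHyperbolic2 {ι : Type} [Nontrivial ι] [Finite ι]
    (A : ι → GL (Fin 2) ℂ) (hA : ∀ i, IsHyperbolic2 (A i : Matrix (Fin 2) (Fin 2) ℂ))
    (hcommon : Pairwise fun i j => ¬HasCommonEigenvector (A i : Matrix (Fin 2) (Fin 2) ℂ) (A j)) :
    ∀ᶠ N in atTop, ∀ m : ι → ℕ, (∀ i, N ≤ m i) →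
      Function.Injective (FreeGroup.lift fun i => A i ^ m i) := by
  choose α β u v hu0 hv0 hu hv hβ hβα using fun i => (hA i).exists_eigenvectors
  have hcross {i j : ι} (hij : i ≠ j) :=
    wedge_ne_zero_of_not_hasCommonEigenvector (hcommon hij)
  have huv (i : ι) : wedge (u i) (v i) ≠ 0 :=
    wedge_ne_zero_of_eigenvalue_ne (hu0 i) (hv0 i) (hu i) (hv i) fun h => (hβα i).ne (by rw [h])
  have hdisj : ∀ᶠ ε in 𝓝[>] (0 : ℝ),
      (Pairwise fun i j => Disjoint (wedgeCone (u i) (v i) ε) (wedgeCone (u j) (v j) ε)) ∧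
      (Pairwise fun i j => Disjoint (wedgeCone (v i) (u i) ε) (wedgeCone (v j) (u j) ε)) ∧
      ∀ i j, Disjoint (wedgeCone (u i) (v i) ε) (wedgeCone (v j) (u j) ε) := by
    refine (eventually_pairwise_disjoint_wedgeCone v fun i j hij =>
      hcross hij (hu0 i) (hu0 j) (hu i) (hu j)).and <|
      (eventually_pairwise_disjoint_wedgeCone u fun i j hij =>
        hcross hij (hv0 i) (hv0 j) (hv i) (hv j)).and <|
      eventually_all.2 fun i => eventually_all.2 fun j => eventually_disjoint_wedgeCone _ _ ?_
    rcases eq_or_ne i j with rfl | hij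
    · exact huv i
    · exact hcross hij (hu0 i) (hv0 j) (hu i) (hv j)
  obtain ⟨ε, ⟨hXX, hYY, hXY⟩, hε : 0 < ε⟩ := (hdisj.and self_mem_nhdsWithin).exists
  have hpow (i : ι) : ∀ᶠ N in atTop, ∀ k, N ≤ k → ‖β i‖ ^ k ≤ ε ^ 2 * ‖α i‖ ^ k :=
    eventually_forall_ge_atTop.2 <|
      eventually_pow_le_mul_pow (norm_nonneg _) (hβα i) (by positivity)
  have hpowVec {i : ι} {x : Fin 2 → ℂ} {c : ℂ} (hx : (A i : Matrix (Fin 2) (Fin 2) ℂ) *ᵥ x = c • x)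
      (k : ℕ) : (↑(A i ^ k) : Matrix (Fin 2) (Fin 2) ℂ) *ᵥ x = c ^ k • x := by
    rw [Units.val_pow_eq_pow_val]; exact pow_mulVec_eq_pow_smul hx k
  filter_upwards [eventually_all.2 hpow] with N hN m hm
  have hmi (i : ι) : ‖β i ^ m i‖ ≤ ε ^ 2 * ‖α i ^ m i‖ := by
    simpa only [norm_pow] using hN i (m i) (hm i)
  have hXne (i : ι) : (wedgeCone (u i) (v i) ε).Nonempty :=
    ⟨⟨u i, hu0 i⟩, by rw [mem_wedgeCone, wedge_self, norm_zero]; positivity⟩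
  refine FreeGroup.injective_lift_of_ping_pong _ (fun i => wedgeCone (u i) (v i) ε)
    (fun i => wedgeCone (v i) (u i) ε) hXne hXX hYY hXY
    (fun i => smul_compl_wedgeCone_subset (hpowVec (hu i) _) (hpowVec (hv i) _) (huv i) hε (hmi i))
    (fun i => inv_smul_compl_wedgeCone_subset (hpowVec (hu i) _) (hpowVec (hv i) _) (huv i) hε
      (pow_ne_zero _ (hβ i)) (hmi i))

/-- Proposition 2.4 of the paper: if `ρ₂ : G → GL(2,ℂ)` is a homomorphism sending `a` and
`b` to hyperbolic matrices with no common eigenvector, then sufficiently high powers of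
`a` and `b` freely generate a free subgroup of rank two in `G`. -/
theorem stmt4 {G : Type*} [Group G] (ρ₂ : G →* GL (Fin 2) ℂ) (a b : G)
    (ha : IsHyperbolic2 ((ρ₂ a : GL (Fin 2) ℂ) : Matrix (Fin 2) (Fin 2) ℂ))
    (hb : IsHyperbolic2 ((ρ₂ b : GL (Fin 2) ℂ) : Matrix (Fin 2) (Fin 2) ℂ))
    (hcommon : ¬ ∃ v : Fin 2 → ℂ, v ≠ 0 ∧
      (∃ c : ℂ, Matrix.mulVec ((ρ₂ a : GL (Fin 2) ℂ) : Matrix (Fin 2) (Fin 2) ℂ) v = c • v) ∧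
      (∃ c : ℂ, Matrix.mulVec ((ρ₂ b : GL (Fin 2) ℂ) : Matrix (Fin 2) (Fin 2) ℂ) v = c • v)) :
    ∃ N : ℕ, 1 ≤ N ∧ ∀ m n : ℕ, N ≤ m → N ≤ n →
      Function.Injective (FreeGroup.lift ![a ^ m, b ^ n] : FreeGroup (Fin 2) →* G) := by
  have hpair : Pairwise fun i j => ¬HasCommonEigenvector
      (![ρ₂ a, ρ₂ b] i : Matrix (Fin 2) (Fin 2) ℂ) (![ρ₂ a, ρ₂ b] j) := by
    intro i j hij
    fin_cases i <;> fin_cases j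
    all_goals first | exact absurd rfl hij | exact hcommon | exact fun h => hcommon h.symm
  obtain ⟨N, hN, hN1⟩ := ((eventually_injective_lift_pow_of_isHyperbolic2 ![ρ₂ a, ρ₂ b]
    (Fin.forall_fin_two.2 ⟨ha, hb⟩) hpair).and (eventually_ge_atTop 1)).exists
  refine ⟨N, hN1, fun m n hm hn => ?_⟩
  have hcomp : ρ₂.comp (FreeGroup.lift ![a ^ m, b ^ n]) =
      FreeGroup.lift fun i => ![ρ₂ a, ρ₂ b] i ^ ![m, n] i :=
    FreeGroup.ext_hom _ _ fun i => by fin_cases i <;> simp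
  refine Function.Injective.of_comp (f := ρ₂) ?_
  rw [← MonoidHom.coe_comp, hcomp]
  exact hN _ (Fin.forall_fin_two.2 ⟨hm, hn⟩)
end

section
/- Let β = 2^{1/4}, and let P = [[5+β²−3β−2β³, 1],[−1, 0]] and Q = [[3+2β², 1],[−1, 0]] in SL(2,ℝ). Then there exists N₀ ≥ 1 such that for all N ≥ N₀, the matrices P^N and Q^N freely generate a free subgroup of rank two of SL(2,ℝ) (no nontrivial reduced word in P^N and Q^N equals the identity matrix). -/
/-- `β = 2^(1/4)`, the real fourth root of `2`. -/
noncomputable def rootBeta : ℝ := (2 : ℝ) ^ ((1 : ℝ) / 4)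

/-- The matrix `P = [[5+β²−3β−2β³, 1],[−1, 0]] ∈ SL(2,ℝ)`. -/
noncomputable def matP : Matrix.SpecialLinearGroup (Fin 2) ℝ :=
  ⟨!![5 + rootBeta ^ 2 - 3 * rootBeta - 2 * rootBeta ^ 3, 1; -1, 0], by
    simp [Matrix.det_fin_two_of]⟩

/-- The matrix `Q = [[3+2β², 1],[−1, 0]] ∈ SL(2,ℝ)`. -/
noncomputable def matQ : Matrix.SpecialLinearGroup (Fin 2) ℝ :=
  ⟨!![3 + 2 * rootBeta ^ 2, 1; -1, 0], by simp [Matrix.det_fin_two_of]⟩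

/-!
The matrix `P` is elliptic (its trace `5 + β² - 3β - 2β³ ≈ -0.52` lies in `(-2, 2)`), so there is no
ping-pong for `P` itself. But `P` and `Q` are defined over the field `ℚ[X]/(X⁴ - 2)`, and the Galois
conjugation `β ↦ -β` turns them into `g_t = [[t, 1], [-1, 0]]` with `t₀ = 5 + β² + 3β + 2β³` and
`t₁ = 3 + 2β²`, which are hyperbolic. Freeness transfers between the two real embeddings because
a ring homomorphism out of a field is injective.

For `t > 2`, `g_t` acts on `ℝ ∪ {∞}` by `s ↦ -t - 1/s`. Let `X_t = [-t - 1, -t + 1]` and let `J` be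
`s ↦ 1/s`. Then `g_t` maps the complement of `J X_t` into `{|s| ≥ 1} ∪ {∞}`, and that set into
`X_t ⊆ {|s| ≥ 1}`, so `g_t^N` maps the complement of `J X_t` into `X_t` for `N ≥ 2`. Since
`J g_t J = g_t⁻¹`, the same holds for `g_t^{-N}` with the roles of `X_t` and `J X_t` exchanged, and
the sets `X_{t₀}, X_{t₁}, J X_{t₀}, J X_{t₁}` are disjoint once `t₀, t₁ > 2` and `|t₀ - t₁| > 2`.
-/

open Polynomial Matrix OnePoint
open scoped Pointwise Function

universe u

theorem irreducible_X_pow_sub_C_natCast_of_prime {p n : ℕ} (hp : p.Prime) (hn : n ≠ 0) :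
    Irreducible (X ^ n - C (p : ℚ)) := by
  have hmonic : (X ^ n - C (p : ℤ)).Monic := monic_X_pow_sub_C _ hn
  have hdeg : (X ^ n - C (p : ℤ)).natDegree = n := natDegree_X_pow_sub_C
  have hsq : ¬ p ^ 2 ∣ p := fun h =>
    absurd ((Nat.pow_dvd_pow_iff_le_right hp.one_lt).mp (by rwa [pow_one])) (by norm_num : ¬ 2 ≤ 1)
  have heis : (X ^ n - C (p : ℤ)).IsEisensteinAt (Ideal.span {(p : ℤ)}) := by
    refine ⟨?_, fun {k} hk => ?_, ?_⟩
    · rw [hmonic.leadingCoeff, Ideal.mem_span_singleton]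
      exact_mod_cast hp.not_dvd_one
    · rw [hdeg] at hk
      rcases Nat.eq_zero_or_pos k with rfl | hk0
      · simp [hn.symm]
      · simp [coeff_X_pow, hk.ne, hk0.ne']
    · rw [Ideal.span_singleton_pow, Ideal.mem_span_singleton]
      simp only [coeff_sub, coeff_X_pow, hn.symm, if_false, coeff_C_zero, zero_sub, dvd_neg]
      exact_mod_cast hsq
  have hprime : (Ideal.span {(p : ℤ)}).IsPrime :=
    (Ideal.span_singleton_prime (by exact_mod_cast hp.ne_zero)).mpr (Nat.prime_iff_prime_int.mp hp)
  have hirr := heis.irreducible hprime hmonic.isPrimitive (by rw [hdeg]; exact Nat.pos_of_ne_zero hn)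
  simpa using (IsPrimitive.Int.irreducible_iff_irreducible_map_cast hmonic.isPrimitive).mp hirr

namespace FreeGroup

variable {ι G H : Type*} [Group G] [Group H]

theorem lift_comp (φ : G →* H) (a : ι → G) : lift (φ ∘ a) = φ.comp (lift a) :=
  ext_hom _ _ fun _ => by simp

theorem injective_lift_comp_iff {φ : G →* H} (hφ : Function.Injective φ) (a : ι → G) :
    Function.Injective (lift (φ ∘ a)) ↔ Function.Injective (lift a) := by
  rw [lift_comp, MonoidHom.coe_comp]
  exact ⟨.of_comp, hφ.comp⟩

theorem injective_lift_of_ping_pong_of_conj_eq_inv {ι G : Type u} [Nontrivial ι] [Group G]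
    {α : Type*} [MulAction G α] (a : ι → G) (j : G) (hja : ∀ i, j * a i * j = (a i)⁻¹)
    (X : ι → Set α) (hXnonempty : ∀ i, (X i).Nonempty) (hXdisj : Pairwise (Disjoint on X))
    (hXjXdisj : ∀ i k, Disjoint (X i) (j • X k)) (hX : ∀ i, a i • (j • X i)ᶜ ⊆ X i) :
    Function.Injective (lift a) := by
  refine injective_lift_of_ping_pong a X (fun i => j • X i) hXnonempty hXdisj
    (fun i k hik => Set.disjoint_smul_set.mpr (hXdisj hik)) hXjXdisj hX fun i => ?_
  calc a⁻¹ i • (X i)ᶜ = j • a i • (j • X i)ᶜ := by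
        rw [Pi.inv_apply, ← hja, mul_smul, mul_smul, Set.smul_set_compl, Set.smul_set_compl]
    _ ⊆ j • X i := Set.smul_set_mono (hX i)

end FreeGroup

lemma pow_smul_subset_of_smul_subset {G α : Type*} [Monoid G] [MulAction G α] {g : G}
    {A U X : Set α} (hA : g • A ⊆ U) (hU : g • U ⊆ X) (hXU : X ⊆ U) {n : ℕ} (hn : 2 ≤ n) :
    g ^ n • A ⊆ X := by
  have hpow : ∀ k : ℕ, g ^ (k + 1) • U ⊆ X := by
    intro k
    induction k with
    | zero => simpa using hU
    | succ k ih =>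
      calc g ^ (k + 1 + 1) • U = g ^ (k + 1) • g • U := by rw [pow_succ, mul_smul]
        _ ⊆ g ^ (k + 1) • U := Set.smul_set_mono (hU.trans hXU)
        _ ⊆ X := ih
  obtain ⟨k, rfl⟩ : ∃ k, n = k + 1 + 1 := ⟨n - 2, by omega⟩
  calc g ^ (k + 1 + 1) • A = g ^ (k + 1) • g • A := by rw [pow_succ, mul_smul]
    _ ⊆ g ^ (k + 1) • U := Set.smul_set_mono hA
    _ ⊆ X := hpow k

section Matrices

variable {R S : Type*} [CommRing R] [CommRing S]

def sl2OfTrace (t : R) : SpecialLinearGroup (Fin 2) R :=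
  ⟨!![t, 1; -1, 0], by simp [det_fin_two_of]⟩

@[simp]
lemma coe_sl2OfTrace (t : R) :
    (sl2OfTrace t : Matrix (Fin 2) (Fin 2) R) = !![t, 1; -1, 0] := rfl

lemma map_sl2OfTrace (f : R →+* S) (t : R) :
    SpecialLinearGroup.map f (sl2OfTrace t) = sl2OfTrace (f t) := by
  ext i j; fin_cases i <;> fin_cases j <;> simp

variable (R) in
def swapGL : GL (Fin 2) R :=
  ⟨!![0, 1; 1, 0], !![0, 1; 1, 0], by simp [one_fin_two], by simp [one_fin_two]⟩

lemma swapGL_inv : (swapGL R)⁻¹ = swapGL R :=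
  inv_eq_of_mul_eq_one_right <| Units.ext <| by simp [swapGL, one_fin_two]

lemma swapGL_mul_sl2OfTrace_mul_swapGL (t : R) :
    swapGL R * SpecialLinearGroup.toGL (sl2OfTrace t) * swapGL R =
      (SpecialLinearGroup.toGL (sl2OfTrace t))⁻¹ := by
  refine eq_inv_of_mul_eq_one_left (Units.ext ?_)
  simp only [Units.val_mul, Units.val_one, SpecialLinearGroup.coe_GL_coe_matrix]
  simp [swapGL, one_fin_two]

lemma swapGL_mul_sl2OfTrace_pow_mul_swapGL (t : R) (n : ℕ) :
    swapGL R * SpecialLinearGroup.toGL (sl2OfTrace t) ^ n * swapGL R =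
      (SpecialLinearGroup.toGL (sl2OfTrace t) ^ n)⁻¹ := by
  have h := conj_pow (a := swapGL R) (b := SpecialLinearGroup.toGL (sl2OfTrace t)) (i := n)
  rwa [swapGL_inv, swapGL_mul_sl2OfTrace_mul_swapGL, inv_pow, eq_comm] at h

lemma Matrix.SpecialLinearGroup.map_injective {n : Type*} [Fintype n] [DecidableEq n]
    {f : R →+* S} (hf : Function.Injective f) :
    Function.Injective (SpecialLinearGroup.map (n := n) f) := by
  intro g h hgh
  ext i j
  exact hf (congrArg (fun g : SpecialLinearGroup n S => (g : Matrix n n S) i j) hgh)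

theorem injective_lift_map_comp_iff_of_field {K ι n : Type*} [Field K] [Nontrivial R]
    [Nontrivial S] [Fintype n] [DecidableEq n] (σ : K →+* R) (τ : K →+* S)
    (a : ι → SpecialLinearGroup n K) :
    Function.Injective (FreeGroup.lift (SpecialLinearGroup.map σ ∘ a)) ↔
      Function.Injective (FreeGroup.lift (SpecialLinearGroup.map τ ∘ a)) := by
  rw [FreeGroup.injective_lift_comp_iff (SpecialLinearGroup.map_injective σ.injective),
    FreeGroup.injective_lift_comp_iff (SpecialLinearGroup.map_injective τ.injective)]

end Matrices

section ProjectiveLine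

variable {t : ℝ}

lemma sl2OfTrace_smul_infty :
    SpecialLinearGroup.toGL (sl2OfTrace t) • (∞ : OnePoint ℝ) = ((-t : ℝ) : OnePoint ℝ) := by
  simp [smul_infty_eq_ite, div_neg]

lemma sl2OfTrace_smul_zero :
    SpecialLinearGroup.toGL (sl2OfTrace t) • ((0 : ℝ) : OnePoint ℝ) = ∞ := by
  simp [smul_some_eq_ite]

lemma sl2OfTrace_smul_coe {s : ℝ} (hs : s ≠ 0) :
    SpecialLinearGroup.toGL (sl2OfTrace t) • (s : OnePoint ℝ) = ((-t - s⁻¹ : ℝ) : OnePoint ℝ) := by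
  simp only [smul_some_eq_ite, SpecialLinearGroup.coe_GL_coe_matrix, coe_sl2OfTrace, of_apply,
    cons_val', cons_val_zero, cons_val_fin_one, cons_val_one, neg_mul, one_mul, add_zero,
    neg_eq_zero, hs, ↓reduceIte, some_eq_iff]
  field_simp
  ring

lemma swapGL_smul_coe {s : ℝ} (hs : s ≠ 0) :
    swapGL ℝ • (s : OnePoint ℝ) = ((s⁻¹ : ℝ) : OnePoint ℝ) := by
  simp [smul_some_eq_ite, swapGL, hs]

def pingPongSet (t : ℝ) : Set (OnePoint ℝ) := (↑) '' Metric.closedBall (-t) 1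

def outsideUnitBall : Set (OnePoint ℝ) := ((↑) '' Metric.ball (0 : ℝ) 1)ᶜ

@[simp]
lemma coe_mem_pingPongSet {s : ℝ} : (s : OnePoint ℝ) ∈ pingPongSet t ↔ |s + t| ≤ 1 := by
  simp [pingPongSet, Real.dist_eq]

@[simp]
lemma infty_notMem_pingPongSet : (∞ : OnePoint ℝ) ∉ pingPongSet t := by
  simp [pingPongSet]

@[simp]
lemma coe_mem_outsideUnitBall {s : ℝ} : (s : OnePoint ℝ) ∈ outsideUnitBall ↔ 1 ≤ |s| := by
  simp [outsideUnitBall]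

@[simp]
lemma infty_mem_outsideUnitBall : (∞ : OnePoint ℝ) ∈ outsideUnitBall := by
  simp [outsideUnitBall]

lemma sl2OfTrace_smul_outsideUnitBall_subset :
    SpecialLinearGroup.toGL (sl2OfTrace t) • outsideUnitBall ⊆ pingPongSet t := by
  refine Set.smul_set_subset_iff.mpr fun x hx => ?_
  induction x using OnePoint.rec with
  | infty => simp [sl2OfTrace_smul_infty]
  | coe s =>
    have hs : 1 ≤ |s| := coe_mem_outsideUnitBall.mp hx
    rw [sl2OfTrace_smul_coe (abs_pos.mp (by linarith)), coe_mem_pingPongSet,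
      show -t - s⁻¹ + t = -s⁻¹ by ring, abs_neg, abs_inv]
    exact inv_le_one_of_one_le₀ hs

lemma sl2OfTrace_smul_compl_swapGL_smul_subset (ht : 1 ≤ t) :
    SpecialLinearGroup.toGL (sl2OfTrace t) • (swapGL ℝ • pingPongSet t)ᶜ ⊆ outsideUnitBall := by
  refine Set.smul_set_subset_iff.mpr fun x hx => ?_
  rw [Set.mem_compl_iff, Set.mem_smul_set_iff_inv_smul_mem, swapGL_inv] at hx
  induction x using OnePoint.rec with
  | infty => simp [sl2OfTrace_smul_infty, abs_of_pos (by linarith : 0 < t), ht]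
  | coe s =>
    rcases eq_or_ne s 0 with rfl | hs
    · simp [sl2OfTrace_smul_zero]
    · rw [swapGL_smul_coe hs, coe_mem_pingPongSet] at hx
      rw [sl2OfTrace_smul_coe hs, coe_mem_outsideUnitBall, ← abs_neg, neg_sub, sub_neg_eq_add]
      exact (not_le.mp hx).le

lemma pingPongSet_subset_outsideUnitBall (ht : 2 ≤ t) : pingPongSet t ⊆ outsideUnitBall := by
  intro x hx
  induction x using OnePoint.rec with
  | infty => simp
  | coe s =>
    rw [coe_mem_pingPongSet, abs_le] at hx
    rw [coe_mem_outsideUnitBall, le_abs]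
    right; linarith [hx.2]

lemma swapGL_smul_pingPongSet_subset (ht : 2 < t) :
    swapGL ℝ • pingPongSet t ⊆ outsideUnitBallᶜ := by
  refine Set.smul_set_subset_iff.mpr fun x hx => ?_
  induction x using OnePoint.rec with
  | infty => simp at hx
  | coe s =>
    rw [coe_mem_pingPongSet, abs_le] at hx
    have hs : s < -1 := by linarith [hx.2]
    rw [swapGL_smul_coe (by linarith), Set.mem_compl_iff, coe_mem_outsideUnitBall, not_le, abs_inv,
      abs_of_neg (by linarith)]
    exact inv_lt_one_of_one_lt₀ (by linarith)

lemma disjoint_pingPongSet {t' : ℝ} (h : 2 < |t - t'|) :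
    Disjoint (pingPongSet t) (pingPongSet t') := by
  refine (Set.disjoint_image_iff OnePoint.coe_injective).mpr
    (Metric.closedBall_disjoint_closedBall ?_)
  rwa [Real.dist_eq, ← abs_neg, neg_sub_neg, neg_sub, one_add_one_eq_two]

end ProjectiveLine

theorem injective_lift_sl2OfTrace_pow {ι : Type} [Nontrivial ι] (t : ι → ℝ) (ht : ∀ i, 2 < t i)
    (hsep : Pairwise fun i j => 2 < |t i - t j|) {N : ℕ} (hN : 2 ≤ N) :
    Function.Injective (FreeGroup.lift fun i => sl2OfTrace (t i) ^ N) := by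
  rw [← FreeGroup.injective_lift_comp_iff SpecialLinearGroup.toGL_injective]
  refine FreeGroup.injective_lift_of_ping_pong_of_conj_eq_inv _ (swapGL ℝ)
    (fun i => ?_) (fun i => pingPongSet (t i)) (fun i => ⟨((-t i : ℝ) : OnePoint ℝ), by simp⟩)
    (fun i j hij => disjoint_pingPongSet (hsep hij))
    (fun i k => disjoint_compl_right.mono (pingPongSet_subset_outsideUnitBall (ht i).le)
      (swapGL_smul_pingPongSet_subset (ht k)))
    (fun i => ?_)
  · simpa only [Function.comp_apply, map_pow] using swapGL_mul_sl2OfTrace_pow_mul_swapGL (t i) N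
  · simp only [Function.comp_apply, map_pow]
    exact pow_smul_subset_of_smul_subset
      (sl2OfTrace_smul_compl_swapGL_smul_subset (by linarith [ht i]))
      sl2OfTrace_smul_outsideUnitBall_subset (pingPongSet_subset_outsideUnitBall (ht i).le) hN

lemma rootBeta_pos : 0 < rootBeta := Real.rpow_pos_of_pos two_pos _

lemma rootBeta_pow_four : rootBeta ^ 4 = 2 := by
  rw [rootBeta, ← Real.rpow_natCast, ← Real.rpow_mul zero_le_two]
  norm_num

lemma matP_eq : matP = sl2OfTrace (5 + rootBeta ^ 2 - 3 * rootBeta - 2 * rootBeta ^ 3) := rfl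

lemma matQ_eq : matQ = sl2OfTrace (3 + 2 * rootBeta ^ 2) := rfl

theorem injective_lift_conjugate_pow {N : ℕ} (hN : 2 ≤ N) :
    Function.Injective (FreeGroup.lift fun i => sl2OfTrace
      (![5 + rootBeta ^ 2 + 3 * rootBeta + 2 * rootBeta ^ 3, 3 + 2 * rootBeta ^ 2] i) ^ N) := by
  have hβ := rootBeta_pos
  have hsep : 2 < (5 + rootBeta ^ 2 + 3 * rootBeta + 2 * rootBeta ^ 3) - (3 + 2 * rootBeta ^ 2) := by
    nlinarith [pow_pos hβ 3]
  refine injective_lift_sl2OfTrace_pow _ (fun i => ?_) (fun i j hij => ?_) hN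
  · fin_cases i <;> simp <;> nlinarith [pow_pos hβ 3]
  · fin_cases i <;> fin_cases j <;> simp at hij ⊢
    · exact lt_abs.mpr (.inl hsep)
    · exact lt_abs.mpr (.inr (by linarith))

/-- For all sufficiently large `N`, the matrices `P^N` and `Q^N` freely generate a free
subgroup of rank two of `SL(2,ℝ)`. -/
theorem stmt8 :
    ∃ N₀ : ℕ, 1 ≤ N₀ ∧ ∀ N : ℕ, N₀ ≤ N →
      Function.Injective
        (FreeGroup.lift ![matP ^ N, matQ ^ N] :
          FreeGroup (Fin 2) →* Matrix.SpecialLinearGroup (Fin 2) ℝ) := by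
  refine ⟨2, one_le_two, fun N hN => ?_⟩
  let f : ℚ[X] := X ^ 4 - C 2
  have : Fact (Irreducible f) :=
    ⟨by simpa using irreducible_X_pow_sub_C_natCast_of_prime Nat.prime_two four_ne_zero⟩
  have hroot : ∀ x : ℝ, x ^ 4 = 2 → f.eval₂ (algebraMap ℚ ℝ) x = 0 := fun x hx => by simp [f, hx]
  let r := AdjoinRoot.root f
  let c : Fin 2 → AdjoinRoot f := ![5 + r ^ 2 - 3 * r - 2 * r ^ 3, 3 + 2 * r ^ 2]
  let σ := AdjoinRoot.lift (algebraMap ℚ ℝ) rootBeta (hroot _ rootBeta_pow_four)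
  let τ := AdjoinRoot.lift (algebraMap ℚ ℝ) (-rootBeta)
    (hroot _ (by rw [Even.neg_pow (by decide), rootBeta_pow_four]))
  have hσ : SpecialLinearGroup.map σ ∘ (fun i => sl2OfTrace (c i) ^ N) = ![matP ^ N, matQ ^ N] := by
    funext i; fin_cases i <;> simp [map_sl2OfTrace, map_ofNat, σ, c, r, matP_eq, matQ_eq]
  have hτ : SpecialLinearGroup.map τ ∘ (fun i => sl2OfTrace (c i) ^ N) =
      fun i => sl2OfTrace (![5 + rootBeta ^ 2 + 3 * rootBeta + 2 * rootBeta ^ 3,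
        3 + 2 * rootBeta ^ 2] i) ^ N := by
    funext i; fin_cases i <;> simp [map_sl2OfTrace, map_ofNat, τ, c, r]; ring_nf
  rw [← hσ, injective_lift_map_comp_iff_of_field σ τ, hτ]
  exact injective_lift_conjugate_pow hN
end

section
/- Let σ : ℤ[√2] → ℤ[√2] be the ring automorphism determined by m + n√2 ↦ m − n√2 (m, n ∈ ℤ). Then the set of pairs (A, σ(A)), where A ranges over SL(2, ℤ[√2]) and σ is applied entrywise (with both coordinates regarded as matrices in SL(2,ℝ) via ℤ[√2] ⊂ ℝ), is a discrete subgroup of SL(2,ℝ) × SL(2,ℝ): its subspace topology is discrete. -/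
/-!
For `z ≠ 0` in `ℤ[√2]`, the product `z · σ z` is the norm of `z`, a nonzero integer, so
`|z| ≥ 1` or `|σ z| ≥ 1`. Applied to an entry where `A ≠ B` differ, this shows that distinct
points `(A, σ A)` and `(B, σ B)` are at sup-distance at least `1` in their entries; since the
entries depend continuously on the point of `SL(2, ℝ) × SL(2, ℝ)`, the set is discrete.
-/

/-- The standard topology on the special linear group, as a subspace of the
space of matrices. -/
noncomputable instance (n : ℕ) (R : Type*) [CommRing R] [TopologicalSpace R] :
    TopologicalSpace (Matrix.SpecialLinearGroup (Fin n) R) :=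
  instTopologicalSpaceSubtype

/-- The embedding `ℤ[√2] → ℝ`, realizing `ℤ[√2]` as `ℤ√2 = Zsqrtd 2`. -/
noncomputable def zsqrt2ToReal : ℤ√2 →+* ℝ := Zsqrtd.toReal (by norm_num)

namespace Zsqrtd

variable {d : ℤ}

theorem toReal_mul_toReal_star (h : 0 ≤ d) (z : ℤ√d) :
    toReal h z * toReal h (star z) = z.norm := by
  rw [← map_mul, ← norm_eq_mul_conj, map_intCast]

theorem one_le_abs_toReal_or_one_le_abs_toReal_star (h : 0 ≤ d) (hd : ∀ n : ℤ, d ≠ n * n)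
    {z : ℤ√d} (hz : z ≠ 0) : 1 ≤ |toReal h z| ∨ 1 ≤ |toReal h (star z)| := by
  have hnorm : (1 : ℝ) ≤ |(z.norm : ℝ)| := by
    exact_mod_cast Int.one_le_abs ((norm_eq_zero hd z).not.mpr hz)
  by_contra! hlt
  rw [← toReal_mul_toReal_star h, abs_mul] at hnorm
  exact hnorm.not_gt (mul_lt_one_of_nonneg_of_lt_one_left (abs_nonneg _) hlt.1 hlt.2.le)

end Zsqrtd

theorem discreteTopology_of_continuous_of_pairwise_le_dist {X Y : Type*} [TopologicalSpace X]
    [PseudoMetricSpace Y] {f : X → Y} (hf : Continuous f) {r : ℝ} (hr : 0 < r) {S : Set X}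
    (hS : S.Pairwise fun x y => r ≤ dist (f x) (f y)) : DiscreteTopology S := by
  rw [discreteTopology_iff_isOpen_singleton]
  intro x
  convert (Metric.isOpen_ball (x := f x) (ε := r)).preimage (hf.comp continuous_subtype_val)
  ext y
  simp only [Set.mem_singleton_iff, Set.mem_preimage, Function.comp_apply, Metric.mem_ball]
  refine ⟨fun hyx => hyx ▸ by simpa using hr, fun hy => Subtype.ext ?_⟩
  by_contra hne
  exact (hS y.2 x.2 hne).not_gt hy

theorem dist_apply_apply_le {ι κ β : Type*} [Fintype ι] [Fintype κ] [PseudoMetricSpace β]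
    (p q : ι → κ → β) (i : ι) (j : κ) : dist (p i j) (q i j) ≤ dist p q :=
  (dist_le_pi_dist _ _ j).trans (dist_le_pi_dist p q i)

namespace Matrix.SpecialLinearGroup

variable {n : ℕ} {R : Type*} [CommRing R]

/-- Read as plain functions, so as to carry the sup distance, which `Matrix` lacks. -/
def entries (p : SpecialLinearGroup (Fin n) ℝ × SpecialLinearGroup (Fin n) ℝ) :
    (Fin n → Fin n → ℝ) × (Fin n → Fin n → ℝ) :=
  (fun i j => p.1 i j, fun i j => p.2 i j)

theorem continuous_entries : Continuous (entries (n := n)) := by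
  unfold entries
  fun_prop

theorem one_le_dist_entries_prod_map {f g : R →+* ℝ}
    (hfg : ∀ z ≠ 0, 1 ≤ |f z| ∨ 1 ≤ |g z|) {A B : SpecialLinearGroup (Fin n) R} (hAB : A ≠ B) :
    1 ≤ dist (entries ((map f).prod (map g) A)) (entries ((map f).prod (map g) B)) := by
  obtain ⟨i, j, hij⟩ : ∃ i j, A i j ≠ B i j := by
    by_contra! h
    exact hAB (ext _ _ h)
  rw [Prod.dist_eq]
  rcases hfg _ (sub_ne_zero.mpr hij) with h | h
  · refine le_max_of_le_left (h.trans ?_)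
    rw [map_sub, ← Real.dist_eq]
    exact dist_apply_apply_le (entries ((map f).prod (map g) A)).1
      (entries ((map f).prod (map g) B)).1 i j
  · refine le_max_of_le_right (h.trans ?_)
    rw [map_sub, ← Real.dist_eq]
    exact dist_apply_apply_le (entries ((map f).prod (map g) A)).2
      (entries ((map f).prod (map g) B)).2 i j

theorem discreteTopology_range_prod_map {f g : R →+* ℝ}
    (hfg : ∀ z ≠ 0, 1 ≤ |f z| ∨ 1 ≤ |g z|) :
    DiscreteTopology ((map (n := Fin n) f).prod (map g)).range :=
  discreteTopology_of_continuous_of_pairwise_le_dist continuous_entries one_pos <| by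
    rintro _ ⟨A, rfl⟩ _ ⟨B, rfl⟩ hne
    exact one_le_dist_entries_prod_map hfg fun h => hne (h ▸ rfl)

end Matrix.SpecialLinearGroup

/-- If `σ : ℤ[√2] → ℤ[√2]` is the ring automorphism `m + n√2 ↦ m − n√2`, then the set of
pairs `(A, σ(A))` with `A ∈ SL(2,ℤ[√2])` (both coordinates regarded as elements of
`SL(2,ℝ)`) is a discrete subgroup of `SL(2,ℝ) × SL(2,ℝ)`. -/
theorem stmt13 (σ : ℤ√2 →+* ℤ√2) (hσ : ∀ m n : ℤ, σ ⟨m, n⟩ = ⟨m, -n⟩) :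
    DiscreteTopology
      (((Matrix.SpecialLinearGroup.map (n := Fin 2) zsqrt2ToReal).prod
        (Matrix.SpecialLinearGroup.map (n := Fin 2) (zsqrt2ToReal.comp σ))).range :
        Subgroup (Matrix.SpecialLinearGroup (Fin 2) ℝ ×
          Matrix.SpecialLinearGroup (Fin 2) ℝ)) := by
  have hσ_star : ∀ z : ℤ√2, σ z = star z
    | ⟨m, k⟩ => (hσ m k).trans (Zsqrtd.star_mk m k).symm
  have two_nonsquare (n : ℤ) : 2 ≠ n * n := fun h => Int.prime_two.not_isSquare ⟨n, h⟩
  refine Matrix.SpecialLinearGroup.discreteTopology_range_prod_map fun z hz => ?_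
  rw [RingHom.comp_apply, hσ_star]
  exact Zsqrtd.one_le_abs_toReal_or_one_le_abs_toReal_star _ two_nonsquare hz
end

section
/- The set of pairs (A, B) ∈ SL(2,ℝ) × SL(2,ℝ) such that A and B freely generate a free subgroup of SL(2,ℝ) of rank two is dense in SL(2,ℝ) × SL(2,ℝ). -/
open Polynomial

namespace Matrix.SpecialLinearGroup

variable {R S : Type*} [CommRing R] [CommRing S]

theorem map_transvection {n : Type*} [Fintype n] [DecidableEq n] (f : R →+* S) {i j : n}
    (hij : i ≠ j) (b : R) : map f (transvection hij b) = transvection hij (f b) := by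
  ext k l
  simp only [map_apply_coe, RingHom.mapMatrix_apply, transvection_coe, map_apply, add_apply,
    one_apply, single_apply]
  split_ifs <;> simp

abbrev upperTransvection (b : R) : SpecialLinearGroup (Fin 2) R :=
  transvection Fin.zero_ne_one b

abbrev lowerTransvection (b : R) : SpecialLinearGroup (Fin 2) R :=
  transvection Fin.zero_ne_one.symm b

theorem coe_upperTransvection (b : R) :
    (upperTransvection b : Matrix (Fin 2) (Fin 2) R) = !![1, b; 0, 1] := by
  ext i j; fin_cases i <;> fin_cases j <;> simp [transvection_coe]

theorem coe_lowerTransvection (b : R) :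
    (lowerTransvection b : Matrix (Fin 2) (Fin 2) R) = !![1, 0; b, 1] := by
  ext i j; fin_cases i <;> fin_cases j <;> simp [transvection_coe]

theorem lowerTransvection_zero : lowerTransvection (0 : R) = 1 :=
  transvection_coeff_zero _

theorem upperTransvection_inv (b : R) : (upperTransvection b)⁻¹ = upperTransvection (-b) :=
  transvection_inv _ b

theorem lowerTransvection_inv (b : R) : (lowerTransvection b)⁻¹ = lowerTransvection (-b) :=
  transvection_inv _ b

theorem upperTransvection_smul (b : R) (v : Fin 2 → R) :
    upperTransvection b • v = ![v 0 + b * v 1, v 1] := by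
  rw [SpecialLinearGroup.smul_def, coe_upperTransvection, smul_eq_mulVec, mulVec_fin_two]
  simp

theorem lowerTransvection_smul (b : R) (v : Fin 2 → R) :
    lowerTransvection b • v = ![v 0, v 1 + b * v 0] := by
  rw [SpecialLinearGroup.smul_def, coe_lowerTransvection, smul_eq_mulVec, mulVec_fin_two]
  simp [add_comm]

theorem det_fin_two_coe (M : SpecialLinearGroup (Fin 2) R) :
    M 0 0 * M 1 1 - M 0 1 * M 1 0 = 1 := by
  rw [← det_fin_two]
  exact M.det_coe

section Factorization

variable {K : Type*} [Field K]

theorem upper_mul_lower_mul_upper_eq (M : SpecialLinearGroup (Fin 2) K) (hc : M 1 0 ≠ 0) :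
    upperTransvection ((M 0 0 - 1) / M 1 0) * lowerTransvection (M 1 0) *
      upperTransvection ((M 1 1 - 1) / M 1 0) = M := by
  have hdet := det_fin_two_coe M
  ext i j
  fin_cases i <;> fin_cases j <;>
    simp [coe_upperTransvection, coe_lowerTransvection] <;> field_simp
  · ring
  · linear_combination hdet
  · ring

theorem exists_lower_mul_upper_mul_lower_mul_upper_eq (M : SpecialLinearGroup (Fin 2) K) :
    ∃ a b c d : K, lowerTransvection a * upperTransvection b * lowerTransvection c *
      upperTransvection d = M := by
  by_cases hc : M 1 0 = 0
  · set N := lowerTransvection 1 * M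
    have hN : N 1 0 ≠ 0 := by
      have hN10 : N 1 0 = M 0 0 + M 1 0 := by
        simp [N, coe_lowerTransvection, mul_apply, Fin.sum_univ_two]
      have hdet := det_fin_two_coe M
      rw [hN10, hc, add_zero]
      rintro h0
      simp [h0, hc] at hdet
    refine ⟨-1, (N 0 0 - 1) / N 1 0, N 1 0, (N 1 1 - 1) / N 1 0, ?_⟩
    rw [mul_assoc, mul_assoc, ← mul_assoc (upperTransvection _),
      upper_mul_lower_mul_upper_eq N hN, ← lowerTransvection_inv, inv_mul_cancel_left]
  · refine ⟨0, (M 0 0 - 1) / M 1 0, M 1 0, (M 1 1 - 1) / M 1 0, ?_⟩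
    rw [lowerTransvection_zero, one_mul, upper_mul_lower_mul_upper_eq M hc]

end Factorization

section PolynomialFamilies

variable {n : Type*} [Fintype n] [DecidableEq n]

noncomputable abbrev evalAt (t : R) : SpecialLinearGroup n R[X] →* SpecialLinearGroup n R :=
  map (evalRingHom t)

theorem evalAt_map_C (t : R) (A : SpecialLinearGroup n R) : evalAt t (map C A) = A := by
  ext i j
  simp

theorem exists_evalAt_zero_eq_and_evalAt_one_eq {K : Type*} [Field K]
    (A T : SpecialLinearGroup (Fin 2) K) :
    ∃ P : SpecialLinearGroup (Fin 2) K[X], evalAt 0 P = A ∧ evalAt 1 P = T := by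
  obtain ⟨a, b, c, d, h⟩ := exists_lower_mul_upper_mul_lower_mul_upper_eq (A⁻¹ * T)
  refine ⟨map C A * (lowerTransvection (C a * X) * upperTransvection (C b * X) *
    lowerTransvection (C c * X) * upperTransvection (C d * X)), ?_, ?_⟩
  · simp [map_transvection, evalAt_map_C]
  · simp [map_transvection, evalAt_map_C, h]

theorem finite_setOf_evalAt_eq_one [IsDomain R] {g : SpecialLinearGroup n R[X]} {t₀ : R}
    (h : evalAt t₀ g ≠ 1) : {t | evalAt t g = 1}.Finite := by
  obtain ⟨i, j, hij⟩ : ∃ i j, (g i j).eval t₀ ≠ (1 : Matrix n n R) i j := by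
    by_contra! h'
    exact h (ext _ _ h')
  have hp : g i j - C ((1 : Matrix n n R) i j) ≠ 0 := fun h0 => hij <| by
    simpa [sub_eq_zero] using congrArg (eval t₀) h0
  refine (finite_setOfPred_isRoot hp).subset fun t (ht : evalAt t g = 1) => ?_
  simpa [sub_eq_zero] using congrArg (fun g : SpecialLinearGroup n R => g i j) ht

theorem countable_setOf_not_injective_evalAt_comp [IsDomain R] {Γ : Type*} [Group Γ]
    [Countable Γ] {φ : Γ →* SpecialLinearGroup n R[X]} {t₀ : R}
    (h : Function.Injective ((evalAt t₀).comp φ)) :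
    {t | ¬Function.Injective ((evalAt t).comp φ)}.Countable := by
  have hsub : {t | ¬Function.Injective ((evalAt t).comp φ)} ⊆
      ⋃ w ∈ {w : Γ | w ≠ 1}, {t | evalAt t (φ w) = 1} := by
    intro t ht
    obtain ⟨w, hw1, hw⟩ : ∃ w, evalAt t (φ w) = 1 ∧ w ≠ 1 := by
      simpa using mt (injective_iff_map_eq_one ((evalAt t).comp φ)).2 ht
    exact Set.mem_biUnion hw hw1
  refine (Set.Countable.biUnion (Set.to_countable _) fun w hw => ?_).mono hsub
  exact (finite_setOf_evalAt_eq_one (t₀ := t₀) fun h1 =>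
    hw ((injective_iff_map_eq_one _).1 h w h1)).countable

theorem continuous_evalAt {m : ℕ} [TopologicalSpace R] [IsTopologicalRing R]
    (g : SpecialLinearGroup (Fin m) R[X]) : Continuous fun t : R => evalAt t g :=
  (continuous_matrix fun i j => (g i j).continuous).subtype_mk _

end PolynomialFamilies

end Matrix.SpecialLinearGroup

def nonzeroVectors (G V : Type*) [Group G] [AddMonoid V] [DistribMulAction G V] :
    SubMulAction G V where
  carrier := {v | v ≠ 0}
  smul_mem' g _ hv := (smul_ne_zero_iff_ne g).mpr hv

@[simp]
theorem mem_nonzeroVectors {G V : Type*} [Group G] [AddMonoid V] [DistribMulAction G V] {v : V} :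
    v ∈ nonzeroVectors G V ↔ v ≠ 0 :=
  Iff.rfl

theorem apply_zero_ne_zero_or_apply_one_ne_zero {M : Type*} [Zero M] {v : Fin 2 → M}
    (hv : v ≠ 0) : v 0 ≠ 0 ∨ v 1 ≠ 0 := by
  by_contra! h
  exact hv (funext fun i => by fin_cases i <;> simp [h])

open Matrix.SpecialLinearGroup

section PingPong

-- `Type`, not `Type*`: the ping-pong lemma puts the group and the index type `Fin 2` in the
-- same universe.
variable {K : Type} [Field K] [LinearOrder K] [IsStrictOrderedRing K]

local notation "V₀" => nonzeroVectors (Matrix.SpecialLinearGroup (Fin 2) K) (Fin 2 → K)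

def pingPongX : Fin 2 → Set V₀ :=
  ![{v | v.1 1 ^ 2 < v.1 0 ^ 2 ∧ 0 ≤ v.1 0 * v.1 1},
    {v | v.1 0 ^ 2 < v.1 1 ^ 2 ∧ 0 ≤ v.1 1 * v.1 0}]

def pingPongY : Fin 2 → Set V₀ :=
  ![{v | v.1 1 ^ 2 < v.1 0 ^ 2 ∧ v.1 0 * v.1 1 < 0},
    {v | v.1 0 ^ 2 < v.1 1 ^ 2 ∧ v.1 1 * v.1 0 < 0}]

-- The ping-pong containments for `upperTransvection 3` and its inverse, in coordinates;
-- swapping `x` and `y` gives those for `lowerTransvection 3`.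
theorem pingPong_forward {x y : K} (h0 : x ≠ 0 ∨ y ≠ 0) (h : ¬(y ^ 2 < x ^ 2 ∧ x * y < 0)) :
    y ^ 2 < (x + 3 * y) ^ 2 ∧ 0 ≤ (x + 3 * y) * y := by
  have hpos : 0 < x ^ 2 + y ^ 2 := by rcases h0 with h0 | h0 <;> positivity
  rw [not_and_or, not_lt, not_lt] at h
  rcases h with h | h <;> constructor <;> nlinarith [sq_nonneg (x + y), sq_nonneg (x - y)]

theorem pingPong_backward {x y : K} (h0 : x ≠ 0 ∨ y ≠ 0) (h : ¬(y ^ 2 < x ^ 2 ∧ 0 ≤ x * y)) :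
    y ^ 2 < (x + -3 * y) ^ 2 ∧ (x + -3 * y) * y < 0 := by
  have hpos : 0 < x ^ 2 + y ^ 2 := by rcases h0 with h0 | h0 <;> positivity
  rw [not_and_or, not_lt, not_le] at h
  rcases h with h | h <;> constructor <;> nlinarith [sq_nonneg (x + y), sq_nonneg (x - y)]

theorem injective_lift_upperTransvection_lowerTransvection :
    Function.Injective (FreeGroup.lift ![upperTransvection (3 : K), lowerTransvection 3]) := by
  refine FreeGroup.injective_lift_of_ping_pong (α := V₀) _ pingPongX pingPongY ?_ ?_ ?_ ?_ ?_ ?_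
  · intro i
    fin_cases i
    · exact ⟨⟨![1, 0], by simp⟩, by simp [pingPongX]⟩
    · exact ⟨⟨![0, 1], by simp⟩, by simp [pingPongX]⟩
  · intro i j hij
    fin_cases i <;> fin_cases j <;> simp only [ne_eq, not_true_eq_false] at hij <;>
      exact Set.disjoint_left.2 fun v hv hv' => by
        simp only [pingPongX] at hv hv'; linarith [hv.1, hv'.1]
  · intro i j hij
    fin_cases i <;> fin_cases j <;> simp only [ne_eq, not_true_eq_false] at hij <;>
      exact Set.disjoint_left.2 fun v hv hv' => by
        simp only [pingPongY] at hv hv'; linarith [hv.1, hv'.1]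
  · intro i j
    fin_cases i <;> fin_cases j <;>
      exact Set.disjoint_left.2 fun v hv hv' => by
        simp only [pingPongX, pingPongY] at hv hv'
        linarith [hv.1, hv.2, hv'.1, hv'.2]
  · intro i
    rw [Set.smul_set_subset_iff]
    intro u hu
    have hu0 := apply_zero_ne_zero_or_apply_one_ne_zero u.2
    fin_cases i
    · simpa [pingPongX, upperTransvection_smul] using pingPong_forward hu0 hu
    · simpa [pingPongX, lowerTransvection_smul] using pingPong_forward hu0.symm hu
  · intro i
    rw [Set.smul_set_subset_iff]
    intro u hu
    have hu0 := apply_zero_ne_zero_or_apply_one_ne_zero u.2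
    fin_cases i
    · simpa [pingPongY, upperTransvection_inv, upperTransvection_smul]
        using pingPong_backward hu0 hu
    · simpa [pingPongY, lowerTransvection_inv, lowerTransvection_smul]
        using pingPong_backward hu0.symm hu

end PingPong

/-- The set of pairs `(A, B)` freely generating a free subgroup of rank two is dense in
`SL(2,ℝ) × SL(2,ℝ)`. -/
theorem stmt17 :
    Dense {p : Matrix.SpecialLinearGroup (Fin 2) ℝ × Matrix.SpecialLinearGroup (Fin 2) ℝ |
      Function.Injective
        (FreeGroup.lift ![p.1, p.2] :
          FreeGroup (Fin 2) →* Matrix.SpecialLinearGroup (Fin 2) ℝ)} := by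
  rw [dense_iff_inter_open]
  rintro U hU ⟨⟨A, B⟩, hAB⟩
  obtain ⟨P, hP0, hP1⟩ := exists_evalAt_zero_eq_and_evalAt_one_eq A (upperTransvection 3)
  obtain ⟨Q, hQ0, hQ1⟩ := exists_evalAt_zero_eq_and_evalAt_one_eq B (lowerTransvection 3)
  have hlift (t : ℝ) : (evalAt t).comp (FreeGroup.lift ![P, Q]) =
      FreeGroup.lift ![evalAt t P, evalAt t Q] :=
    FreeGroup.ext_hom _ _ fun i => by fin_cases i <;> simp
  have hbad := countable_setOf_not_injective_evalAt_comp (t₀ := 1) (φ := FreeGroup.lift ![P, Q])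
    (by simpa [hlift, hP1, hQ1] using injective_lift_upperTransvection_lowerTransvection)
  have hγ : Continuous fun t => (evalAt t P, evalAt t Q) :=
    (continuous_evalAt P).prodMk (continuous_evalAt Q)
  obtain ⟨t, htU, ht⟩ := (hbad.dense_compl ℝ).inter_open_nonempty _ (hU.preimage hγ)
    ⟨0, by simpa [hP0, hQ0] using hAB⟩
  exact ⟨_, htU, by simpa [hlift] using ht⟩
end
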